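/- arXiv:math/0207282 — 2 statements merged into one kernel-verified Lean document; each statement's English description precedes it below -/
import Mathlib

section
/- For a Lip-normed operator system (X, L) and every n in N, the topology induced on UCP_n(X) by the metric rho_{L,n} coincides with the point-norm topology, i.e. the topology of pointwise norm convergence of maps from X to M_n. -/
/- Framework for Kerr's "Matricial quantum Gromov-Hausdorff distance":
operator systems inside unital C*-algebras, Lip-normed operator systems,
matrix state spaces, and the matricial quantum Gromov-Hausdorff distances. -/

open scoped ComplexOrder ENNReal

noncomputable section

universe u v w

namespace QGHD

/-- Positivity in a *-ring: in a unital C*-algebra this characterizes the positive cone. -/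
def PosIn {A : Type*} [Ring A] [StarRing A] (a : A) : Prop := ∃ b : A, a = star b * b

/-- Positivity of a square matrix over a *-ring: the order on `Mₘ(A)` inherited from the
C*-algebra `Mₘ(A)`. -/
def MatPos {A : Type*} [Ring A] [StarRing A] {m : ℕ} (x : Matrix (Fin m) (Fin m) A) : Prop :=
  ∃ y : Matrix (Fin m) (Fin m) A, x = y.conjTranspose * y

/-- The matrix algebra `Mₙ(ℂ)`, realized as the C*-algebra of operators on `ℂⁿ`
so that it carries its C*-norm. -/
abbrev MatAlg (n : ℕ) : Type := EuclideanSpace ℂ (Fin n) →L[ℂ] EuclideanSpace ℂ (Fin n)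

/-- The C*-norm of a matrix over a unital C*-algebra, computed via the standard
Hilbert module `Aⁿ`. -/
def matNorm {A : Type*} [NormedRing A] [StarRing A] {n : ℕ}
    (z : Matrix (Fin n) (Fin n) A) : ℝ :=
  sSup {r : ℝ | ∃ ξ η : Fin n → A,
    ‖∑ i, star (ξ i) * ξ i‖ ≤ 1 ∧ ‖∑ i, star (η i) * η i‖ ≤ 1 ∧
    r = ‖∑ i, ∑ j, star (ξ i) * z i j * η j‖}

section maps

variable {A : Type u} [Ring A] [StarRing A] [Algebra ℂ A]

/-- A state on an operator system `X ⊆ A`: a unital positive linear functional. -/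
def IsState (X : Submodule ℂ A) (σ : ↥X → ℂ) : Prop :=
  IsLinearMap ℂ σ ∧ (∀ x : ↥X, (x : A) = 1 → σ x = 1) ∧
    ∀ x : ↥X, PosIn (x : A) → 0 ≤ σ x

/-- The state space of an operator system, as a set of functions (with the topology of
pointwise convergence, i.e. the weak-* topology). -/
def States (X : Submodule ℂ A) : Set (↥X → ℂ) := {σ | IsState X σ}

/-- Unitality of a map on an operator system. -/
def Unital {R : Type*} [One R] (X : Submodule ℂ A) (φ : ↥X → R) : Prop :=
  ∀ x : ↥X, (x : A) = 1 → φ x = 1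

/-- The matrix over the ambient algebra associated to a matrix over an operator system. -/
def coeMat {X : Submodule ℂ A} {m : ℕ} (x : Matrix (Fin m) (Fin m) ↥X) :
    Matrix (Fin m) (Fin m) A :=
  Matrix.of fun i j => (x i j : A)

/-- `n`-positivity of a map on an operator system. -/
def NPos {R : Type*} [Ring R] [StarRing R] (X : Submodule ℂ A) (n : ℕ) (φ : ↥X → R) : Prop :=
  ∀ m : ℕ, 1 ≤ m → m ≤ n → ∀ x : Matrix (Fin m) (Fin m) ↥X,
    MatPos (coeMat x) → MatPos (Matrix.of fun i j => φ (x i j))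

/-- Complete positivity of a map on an operator system. -/
def CP {R : Type*} [Ring R] [StarRing R] (X : Submodule ℂ A) (φ : ↥X → R) : Prop :=
  ∀ m : ℕ, ∀ x : Matrix (Fin m) (Fin m) ↥X,
    MatPos (coeMat x) → MatPos (Matrix.of fun i j => φ (x i j))

/-- Unital completely positive maps. -/
def IsUCP {R : Type*} [Ring R] [StarRing R] [Module ℂ R] (X : Submodule ℂ A) (φ : ↥X → R) :
    Prop :=
  IsLinearMap ℂ φ ∧ Unital X φ ∧ CP X φ

/-- Complete positivity for maps defined on a whole *-ring. -/
def CPRing {R S : Type*} [Ring R] [StarRing R] [Ring S] [StarRing S] (φ : R → S) : Prop :=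
  ∀ (m : ℕ) (x : Matrix (Fin m) (Fin m) R), MatPos x → MatPos (Matrix.of fun i j => φ (x i j))

/-- The `ℝ≥0∞`-valued distance on functionals associated with a Lip-norm datum `(dom, L)`:
`sup { |σ(x) - ω(x)| : x ∈ dom, L x ≤ 1 }`. -/
def rhoAux (X : Submodule ℂ A) (dom : Set A) (L : A → ℝ) (σ ω : ↥X → ℂ) : ℝ≥0∞ :=
  ⨆ x : {x : ↥X // (x : A) ∈ dom ∧ L (x : A) ≤ 1}, (‖σ x.1 - ω x.1‖₊ : ℝ≥0∞)

end maps

/-- The topology generated by the balls of an `ℝ≥0∞`-valued distance function.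
(For a genuine metric this is the metric topology.) -/
def ballTopology {α : Type*} (d : α → α → ℝ≥0∞) : TopologicalSpace α :=
  TopologicalSpace.generateFrom
    {s | ∃ (x : α) (ε : ℝ≥0∞), 0 < ε ∧ s = {y | d x y < ε}}

/-- A Lip-normed operator system: a closed unital self-adjoint subspace `X` of a unital
C*-algebra `A` together with a Lip-norm `L` defined on a dense real order-unit subspace
`dom` of the self-adjoint part of `X`, such that `L` vanishes exactly on the real scalar
multiples of the unit, the set `{L ≤ 1}` is closed, and the associated metric on the state
space induces the weak-* topology. -/
structure LipOpSys (A : Type u) [NormedRing A] [StarRing A] [CStarRing A]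
    [NormedAlgebra ℂ A] [CompleteSpace A] [StarModule ℂ A] where
  X : Submodule ℂ A
  closed_carrier : IsClosed (X : Set A)
  one_mem : (1 : A) ∈ X
  star_mem : ∀ x ∈ X, star x ∈ X
  dom : Set A
  dom_subset : ∀ x ∈ dom, x ∈ X ∧ IsSelfAdjoint x
  one_mem_dom : (1 : A) ∈ dom
  add_mem_dom : ∀ x ∈ dom, ∀ y ∈ dom, x + y ∈ dom
  smul_mem_dom : ∀ (c : ℝ), ∀ x ∈ dom, (c : ℂ) • x ∈ dom
  dom_dense : ∀ x ∈ X, IsSelfAdjoint x → x ∈ closure dom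
  L : A → ℝ
  L_nonneg : ∀ x, 0 ≤ L x
  L_add : ∀ x ∈ dom, ∀ y ∈ dom, L (x + y) ≤ L x + L y
  L_smul : ∀ (c : ℝ), ∀ x ∈ dom, L ((c : ℂ) • x) = |c| * L x
  L_eq_zero_iff : ∀ x ∈ dom, (L x = 0 ↔ ∃ c : ℝ, x = (c : ℂ) • (1 : A))
  D1_closed : IsClosed {x : A | x ∈ dom ∧ L x ≤ 1}
  weakStar : ballTopology (fun σ ω : ↥(States X) => rhoAux X dom L σ.1 ω.1) =
    instTopologicalSpaceSubtype

section core

variable {A : Type u} [NormedRing A] [StarRing A] [CStarRing A]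
  [NormedAlgebra ℂ A] [CompleteSpace A] [StarModule ℂ A]
variable {B : Type v} [NormedRing B] [StarRing B] [CStarRing B]
  [NormedAlgebra ℂ B] [CompleteSpace B] [StarModule ℂ B]

/-- The matrix state space `UCPₙ(X)`: unital completely positive maps from `X` into `Mₙ`. -/
def UCPn (S : LipOpSys A) (n : ℕ) : Set (↥S.X → MatAlg n) := {φ | IsUCP S.X φ}

/-- The metric `ρ_{L,n}` on `UCPₙ(X)`. -/
def rho (S : LipOpSys A) (n : ℕ) (φ ψ : ↥S.X → MatAlg n) : ℝ≥0∞ :=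
  ⨆ x : {x : ↥S.X // (x : A) ∈ S.dom ∧ S.L (x : A) ≤ 1}, (‖φ x.1 - ψ x.1‖₊ : ℝ≥0∞)

/-- The metric `ρ_{L,1}` on the state space. -/
def rhoS (S : LipOpSys A) (σ ω : ↥S.X → ℂ) : ℝ≥0∞ := rhoAux S.X S.dom S.L σ ω

/-- The diameter of `UCPₙ(X)` with respect to `ρ_{L,n}`. -/
def diamUCP (S : LipOpSys A) (n : ℕ) : ℝ≥0∞ :=
  ⨆ φ ∈ UCPn S n, ⨆ ψ ∈ UCPn S n, rho S n φ ψ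

/-- The extended seminorm `Lᵉ` on all of `X`:
`Lᵉ(x) = sup { |σ(x) - ω(x)| / ρ_{L,1}(σ,ω) : σ ≠ ω states }`. -/
def Le (S : LipOpSys A) (x : ↥S.X) : ℝ≥0∞ :=
  ⨆ p : {p : (↥S.X → ℂ) × (↥S.X → ℂ) //
      p.1 ∈ States S.X ∧ p.2 ∈ States S.X ∧ p.1 ≠ p.2},
    (‖p.1.1 x - p.1.2 x‖₊ : ℝ≥0∞) / rhoS S p.1.1 p.1.2

/-- The matrix seminorm `Lⁿ` on `Mₙ ⊗ X`. -/
def LnX (S : LipOpSys A) {n : ℕ} (x : Matrix (Fin n) (Fin n) ↥S.X) : ℝ≥0∞ :=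
  ⨆ i, ⨆ j, Le S (x i j)

/-- Membership of a Lip-norm `M` on the direct sum `X ⊕ Y` in the set `M(L_X, L_Y)`:
its domain is `D(L_X) ⊕ D(L_Y)` and it induces `L_X` and `L_Y` as quotient Lip-norms via
the coordinate projections. -/
structure MemM (S : LipOpSys A) (T : LipOpSys B) (M : LipOpSys (A × B)) : Prop where
  X_eq : M.X = S.X.prod T.X
  dom_eq : M.dom = S.dom ×ˢ T.dom
  quot_left : ∀ x ∈ S.dom, S.L x = sInf {r : ℝ | ∃ y ∈ T.dom, M.L (x, y) = r}
  quot_right : ∀ y ∈ T.dom, T.L y = sInf {r : ℝ | ∃ x ∈ S.dom, M.L (x, y) = r}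

/-- The distance, with respect to the metric `ρ_{M,n}` on `UCPₙ(X ⊕ Y)`, between (the
canonical embeddings of) `φ ∈ UCPₙ(X)` and `ψ ∈ UCPₙ(Y)`. -/
def crossRho (S : LipOpSys A) (T : LipOpSys B) (M : LipOpSys (A × B)) (n : ℕ)
    (φ : ↥S.X → MatAlg n) (ψ : ↥T.X → MatAlg n) : ℝ≥0∞ :=
  ⨆ p : {p : ↥S.X × ↥T.X //
      ((p.1 : A), (p.2 : B)) ∈ M.dom ∧ M.L ((p.1 : A), (p.2 : B)) ≤ 1},
    (‖φ p.1.1 - ψ p.1.2‖₊ : ℝ≥0∞)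

/-- The Hausdorff distance between `UCPₙ(X)` and `UCPₙ(Y)` inside `UCPₙ(X ⊕ Y)` with
respect to `ρ_{M,n}`. -/
def hausdorffD (S : LipOpSys A) (T : LipOpSys B) (M : LipOpSys (A × B)) (n : ℕ) : ℝ≥0∞ :=
  max (⨆ φ ∈ UCPn S n, ⨅ ψ ∈ UCPn T n, crossRho S T M n φ ψ)
      (⨆ ψ ∈ UCPn T n, ⨅ φ ∈ UCPn S n, crossRho S T M n φ ψ)

/-- The matricial `n`-distance `distⁿₛ`. -/
def distN (S : LipOpSys A) (T : LipOpSys B) (n : ℕ) : ℝ≥0∞ :=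
  ⨅ M : {M : LipOpSys (A × B) // MemM S T M}, hausdorffD S T M.1 n

/-- The complete distance `distₛ`. -/
def distS (S : LipOpSys A) (T : LipOpSys B) : ℝ≥0∞ :=
  ⨅ M : {M : LipOpSys (A × B) // MemM S T M}, ⨆ n : ℕ, hausdorffD S T M.1 n

/-- The canonical element of `X ⊕ Y` determined by elements of `X` and `Y`. -/
def pairMem (S : LipOpSys A) (T : LipOpSys B) (M : LipOpSys (A × B))
    (h : M.X = S.X.prod T.X) (x : ↥S.X) (y : ↥T.X) : ↥M.X :=
  ⟨((x : A), (y : B)), by rw [h, Submodule.mem_prod]; exact ⟨x.2, y.2⟩⟩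

/-- The matrix seminorm `Lⁿ` evaluated on a pair of matrices over `X` and over `Y`. -/
def LnPair (S : LipOpSys A) (T : LipOpSys B) (M : LipOpSys (A × B))
    (h : M.X = S.X.prod T.X) {n : ℕ}
    (x : Matrix (Fin n) (Fin n) ↥S.X) (z : Matrix (Fin n) (Fin n) ↥T.X) : ℝ≥0∞ :=
  ⨆ i, ⨆ j, Le M (pairMem S T M h (x i j) (z i j))

/-- The set `N^λ_{Lⁿ,Y}(x)` of elements of `Mₙ ⊗ Y` paired with `x ∈ Mₙ ⊗ X` within
`Lⁿ`-distance `λ`. -/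
def NbdY (S : LipOpSys A) (T : LipOpSys B) (M : LipOpSys (A × B))
    (h : M.X = S.X.prod T.X) {n : ℕ} (lam : ℝ≥0∞)
    (x : Matrix (Fin n) (Fin n) ↥S.X) : Set (Matrix (Fin n) (Fin n) ↥T.X) :=
  {z | LnPair S T M h x z ≤ lam}

/-- The set `N^λ_{Lⁿ,X}(y)`. -/
def NbdX (S : LipOpSys A) (T : LipOpSys B) (M : LipOpSys (A × B))
    (h : M.X = S.X.prod T.X) {n : ℕ} (lam : ℝ≥0∞)
    (y : Matrix (Fin n) (Fin n) ↥T.X) : Set (Matrix (Fin n) (Fin n) ↥S.X) :=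
  {z | LnPair S T M h z y ≤ lam}

/-- The `(i,j)` entry of an element of `MatAlg n`. -/
def entry {n : ℕ} (T : MatAlg n) (i j : Fin n) : ℂ :=
  inner ℂ (EuclideanSpace.single i (1 : ℂ)) (T (EuclideanSpace.single j (1 : ℂ)))

/-- The unit of `Mₙ(X)`. -/
def matOne (S : LipOpSys A) (n : ℕ) : Matrix (Fin n) (Fin n) ↥S.X :=
  Matrix.of fun i j => if i = j then (⟨1, S.one_mem⟩ : ↥S.X) else 0

/-- The linear functional `σ_φ` on `Mₙ ⊗ X` associated to a c.p. map `φ : X → Mₙ`. -/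
def sigmaOf {A' : Type u} [Ring A'] [StarRing A'] [Algebra ℂ A'] (X : Submodule ℂ A')
    {n : ℕ} (φ : ↥X → MatAlg n) (x : Matrix (Fin n) (Fin n) ↥X) : ℂ :=
  (n : ℂ)⁻¹ * ∑ i, ∑ j, entry (φ (x i j)) i j

/-- `SCPₙ(X)`: completely positive maps `φ : X → Mₙ` such that `σ_φ` is a state on
`Mₙ ⊗ X`. -/
def SCP (S : LipOpSys A) (n : ℕ) (φ : ↥S.X → MatAlg n) : Prop :=
  IsLinearMap ℂ φ ∧ CP S.X φ ∧ sigmaOf S.X φ (matOne S n) = 1 ∧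
    ∀ x : Matrix (Fin n) (Fin n) ↥S.X, MatPos (coeMat x) → 0 ≤ sigmaOf S.X φ x

/-- A Lip-isometric map between Lip-normed operator systems. -/
def LipIsometric (S : LipOpSys A) (T : LipOpSys B) (Φ : ↥S.X → ↥T.X) : Prop :=
  ∀ x : ↥S.X, (x : A) ∈ S.dom → (Φ x : B) ∈ T.dom ∧ T.L (Φ x : B) = S.L (x : A)

/-- A bi-Lip-isometric unital linear bijection between Lip-normed operator systems. -/
def BiLipIso (S : LipOpSys A) (T : LipOpSys B) (Φ : ↥S.X → ↥T.X) : Prop :=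
  IsLinearMap ℂ Φ ∧ Function.Bijective Φ ∧ (∀ x : ↥S.X, (x : A) = 1 → (Φ x : B) = 1) ∧
    LipIsometric S T Φ ∧
    ∀ y : ↥T.X, (y : B) ∈ T.dom → ∃ x : ↥S.X, Φ x = y ∧ (x : A) ∈ S.dom

/-- `Φ` is an order isomorphism at all matrix levels `m = 1, …, n` (together with
bijectivity and unitality this is a unital `n`-order isomorphism). -/
def OrderIsoTo (S : LipOpSys A) (T : LipOpSys B) (n : ℕ) (Φ : ↥S.X → ↥T.X) : Prop :=
  ∀ m : ℕ, 1 ≤ m → m ≤ n → ∀ x : Matrix (Fin m) (Fin m) ↥S.X,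
    (MatPos (coeMat x) ↔ MatPos (Matrix.of fun i j => ((Φ (x i j) : B))))

/-- `Φ` is an order isomorphism at every matrix level. -/
def CompleteOrderIso (S : LipOpSys A) (T : LipOpSys B) (Φ : ↥S.X → ↥T.X) : Prop :=
  ∀ m : ℕ, ∀ x : Matrix (Fin m) (Fin m) ↥S.X,
    (MatPos (coeMat x) ↔ MatPos (Matrix.of fun i j => ((Φ (x i j) : B))))

/-- Nuclearity of an operator system: the identity map is a point-norm limit of u.c.p.
maps factoring through matrix algebras. -/
def Nuclear (X : Submodule ℂ A) : Prop :=
  ∀ ε : ℝ, 0 < ε → ∀ F : Finset ↥X, ∃ (k : ℕ) (α : ↥X → MatAlg k) (β : MatAlg k → A),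
    IsUCP X α ∧ IsLinearMap ℂ β ∧ β 1 = 1 ∧ CPRing β ∧ (∀ z, β z ∈ X) ∧
    ∀ x ∈ F, ‖β (α x) - (x : A)‖ ≤ ε

/-- The `f`-Leibniz property of a Lip-normed unital C*-algebra: the Lip-norm is the
restriction of an adjoint-invariant extended seminorm, finite on a dense *-subalgebra,
satisfying `L'(xy) ≤ f (L'(x)) (L'(y)) ‖y‖ ‖x‖`. -/
def FLeibniz (f : ℝ → ℝ → ℝ → ℝ → ℝ) (M : LipOpSys A) : Prop :=
  ∃ L' : A → ℝ≥0∞,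
    (∀ x y : A, L' (x + y) ≤ L' x + L' y) ∧
    (∀ (c : ℂ) (x : A), L' (c • x) = (‖c‖₊ : ℝ≥0∞) * L' x) ∧
    (∀ x : A, L' (star x) = L' x) ∧
    (∃ D : Subalgebra ℂ A, (∀ x ∈ D, star x ∈ D) ∧ Dense (D : Set A) ∧
      ∀ x ∈ D, L' x ≠ ⊤) ∧
    (∀ x ∈ M.dom, L' x = ENNReal.ofReal (M.L x)) ∧
    (∀ x y : A, L' x ≠ ⊤ → L' y ≠ ⊤ →
      (L' (x * y)).toReal ≤ f (L' x).toReal (L' y).toReal ‖y‖ ‖x‖)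

/-- The `f`-Leibniz complete distance. -/
def distSf (f : ℝ → ℝ → ℝ → ℝ → ℝ) (S : LipOpSys A) (T : LipOpSys B) : ℝ≥0∞ :=
  ⨅ M : {M : LipOpSys (A × B) // MemM S T M ∧ FLeibniz f M},
    ⨆ n : ℕ, hausdorffD S T M.1 n

end core

/-- A bundled unital C*-algebra. -/
structure CstarAlg : Type (u + 1) where
  carrier : Type u
  [nr : NormedRing carrier]
  [sr : StarRing carrier]
  [cs : CStarRing carrier]
  [na : NormedAlgebra ℂ carrier]
  [cp : CompleteSpace carrier]
  [sm : StarModule ℂ carrier]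

attribute [instance] CstarAlg.nr CstarAlg.sr CstarAlg.cs CstarAlg.na CstarAlg.cp CstarAlg.sm

/-- A bundled Lip-normed operator system. -/
structure BundledLip : Type (u + 1) where
  alg : CstarAlg.{u}
  sys : LipOpSys alg.carrier

/-- `Afn_L(ε)`: the smallest `k` such that some Lip-normed operator subsystem of `M_k` is
within complete distance `ε` of the given Lip-normed operator system (`⊤` if none). -/
def Afn (b : BundledLip.{u}) (ε : ℝ) : ℕ∞ :=
  sInf {m : ℕ∞ | ∃ k : ℕ, m = (k : ℕ∞) ∧
    ∃ T : LipOpSys (MatAlg k), distS b.sys T ≤ ENNReal.ofReal ε}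

/-- Order-unit states of a subset `dom` of (the self-adjoint part of) a C*-algebra. -/
def IsOUState {A : Type u} [Ring A] [StarRing A] [Algebra ℂ A] (dom : Set A)
    (f : ↥dom → ℝ) : Prop :=
  (∀ x y z : ↥dom, (x : A) + (y : A) = (z : A) → f x + f y = f z) ∧
  (∀ (c : ℝ) (x y : ↥dom), (c : ℂ) • (x : A) = (y : A) → c * f x = f y) ∧
  (∀ x : ↥dom, (x : A) = 1 → f x = 1) ∧
  (∀ x : ↥dom, PosIn (x : A) → 0 ≤ f x)

/-- The order-unit state space. -/
def OUStates {A : Type u} [Ring A] [StarRing A] [Algebra ℂ A] (dom : Set A) :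
    Set (↥dom → ℝ) :=
  {f | IsOUState dom f}

end QGHD

namespace QGHD

variable {A : Type u} [NormedRing A] [StarRing A] [CStarRing A]
  [NormedAlgebra ℂ A] [CompleteSpace A] [StarModule ℂ A]

/-!
The point-norm topology on `UCPₙ(X)` is the coarsest one making every evaluation `φ ↦ φ x`
continuous, and each evaluation is uniformly continuous for `ρ_{L,n}`: for self-adjoint `x`
pick `y ∈ D(L)` close to `x`; then `‖φ y - ψ y‖ ≤ L(y) ρ_{L,n}(φ, ψ)`, while u.c.p. maps satisfy
`‖φ z‖ ≤ 2 ‖z‖` on self-adjoint `z`; a general `x` is split into real and imaginary parts.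

Conversely, the vector states `x ↦ ⟪ξ, φ x ξ⟫` of `φ ∈ UCPₙ(X)` at unit vectors `ξ` depend
continuously on `(φ, ξ)` for the weak-* topology, which is the `ρ_{L,1}`-topology by assumption.
Compactness of the unit sphere makes `ρ_{L,1}` between the vector states of `φ₀` and `ψ`
uniformly small in `ξ` once `ψ` is point-norm close to `φ₀`, and polarization bounds the norm of
`φ₀ x - ψ x` by twice the supremum of its quadratic form on the unit sphere, so
`ρ_{L,n}(φ₀, ψ)` is small.
-/

open scoped NNReal Topology InnerProductSpace
open Filter

section SupDistance

variable {ι : Sort*} {E : Type*} [SeminormedAddCommGroup E]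

lemma _root_.iSup_nnnorm_sub_self (f : ι → E) : ⨆ i, (‖f i - f i‖₊ : ℝ≥0∞) = 0 := by simp

lemma _root_.iSup_nnnorm_sub_comm (f g : ι → E) :
    ⨆ i, (‖f i - g i‖₊ : ℝ≥0∞) = ⨆ i, (‖g i - f i‖₊ : ℝ≥0∞) :=
  iSup_congr fun i => enorm_sub_rev (f i) (g i)

lemma _root_.iSup_nnnorm_sub_le_add (f g h : ι → E) :
    ⨆ i, (‖f i - h i‖₊ : ℝ≥0∞) ≤
      (⨆ i, (‖f i - g i‖₊ : ℝ≥0∞)) + ⨆ i, (‖g i - h i‖₊ : ℝ≥0∞) := by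
  refine iSup_le fun i => le_trans ?_ (add_le_add (le_iSup _ i) (le_iSup _ i))
  simpa only [edist_nndist, nndist_eq_nnnorm] using edist_triangle (f i) (g i) (h i)

end SupDistance

section BallTopology

variable {α : Type*} {d : α → α → ℝ≥0∞}

lemma isOpen_ballTopology_ball (x : α) {ε : ℝ≥0∞} (hε : 0 < ε) :
    IsOpen[ballTopology d] {y | d x y < ε} :=
  TopologicalSpace.isOpen_generateFrom_of_mem ⟨x, ε, hε, rfl⟩

lemma le_ballTopology [t : TopologicalSpace α] (d_triangle : ∀ x y z, d x z ≤ d x y + d y z)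
    (h : ∀ x, Tendsto (d x) (𝓝 x) (𝓝 0)) : t ≤ ballTopology d := by
  refine le_generateFrom ?_
  rintro _ ⟨x, ε, -, rfl⟩
  refine isOpen_iff_mem_nhds.2 fun y hy => ?_
  obtain ⟨r, hr, hlt⟩ := ENNReal.lt_iff_exists_add_pos_lt.1 hy
  filter_upwards [(h y).eventually (gt_mem_nhds (ENNReal.coe_pos.2 hr))] with z hz
  exact (d_triangle x y z).trans_lt ((ENNReal.add_lt_add_left hy.ne_top hz).trans hlt)

lemma continuous_ballTopology {β : Type*} [PseudoMetricSpace β] (d_self : ∀ x, d x x = 0)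
    {f : α → β} (hf : ∀ ε > 0, ∃ δ > 0, ∀ x y, d x y < δ → dist (f x) (f y) < ε) :
    Continuous[ballTopology d, _] f := by
  let := ballTopology d
  refine continuous_iff_continuousAt.2 fun x => Metric.tendsto_nhds.2 fun ε hε => ?_
  obtain ⟨δ, hδ, hfδ⟩ := hf ε hε
  filter_upwards [(isOpen_ballTopology_ball x hδ).mem_nhds (by simpa [d_self] using hδ)]
    with y hy
  rw [dist_comm]
  exact hfδ x y hy

lemma eventually_forall_lt_of_compactSpace {Y K Z : Type*} [TopologicalSpace Y]
    [TopologicalSpace K] [CompactSpace K] [TopologicalSpace Z] {d : Z → Z → ℝ≥0∞}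
    (d_self : ∀ z, d z z = 0) (d_comm : ∀ z w, d z w = d w z)
    (d_triangle : ∀ x y z, d x z ≤ d x y + d y z)
    (isOpen_ball : ∀ z ε, 0 < ε → IsOpen {w | d z w < ε})
    {F : Y → K → Z} (hF : Continuous (Function.uncurry F)) (y₀ : Y) {ε : ℝ≥0∞} (hε : 0 < ε) :
    ∀ᶠ y in 𝓝 y₀, ∀ k, d (F y₀ k) (F y k) < ε := by
  have hε2 : 0 < ε / 2 := ENNReal.half_pos hε.ne'
  have near : ∀ z, ∀ᶠ w in 𝓝 z, d z w < ε / 2 := fun z =>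
    (isOpen_ball z _ hε2).mem_nhds (by simpa [d_self] using hε2)
  have hF₀ : Continuous fun p : Y × K => F y₀ p.2 :=
    hF.comp (continuous_const.prodMk continuous_snd)
  simpa using isCompact_univ.eventually_forall_of_forall_eventually fun k₀ _ =>
    ((hF.continuousAt.eventually (near _)).and (hF₀.continuousAt.eventually (near _))).mono
      fun p hp => calc
        d (F y₀ p.2) (F p.1 p.2) ≤ d (F y₀ p.2) (F y₀ k₀) + d (F y₀ k₀) (F p.1 p.2) :=
          d_triangle _ _ _
        _ = d (F y₀ k₀) (F y₀ p.2) + d (F y₀ k₀) (F p.1 p.2) := by rw [d_comm (F y₀ p.2)]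
        _ < ε / 2 + ε / 2 := ENNReal.add_lt_add hp.2 hp.1
        _ = ε := ENNReal.add_halves ε

end BallTopology

lemma _root_.Complex.norm_le_of_nonneg_add_of_nonneg_sub {q : ℂ} {r : ℝ} (h₁ : 0 ≤ (r : ℂ) + q)
    (h₂ : 0 ≤ (r : ℂ) - q) : ‖q‖ ≤ r := by
  rw [Complex.nonneg_iff] at h₁ h₂
  simp only [Complex.add_re, Complex.sub_re, Complex.ofReal_re, Complex.add_im, Complex.sub_im,
    Complex.ofReal_im, zero_add, zero_sub] at h₁ h₂
  have him : q.im = 0 := by linarith [h₁.2, h₂.2]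
  rw [← Complex.re_add_im q, him, Complex.ofReal_zero, zero_mul, add_zero, Complex.norm_real,
    Real.norm_eq_abs, abs_le]
  constructor <;> linarith [h₁.1, h₂.1]

section InnerProduct

variable {E : Type*} [NormedAddCommGroup E] [InnerProductSpace ℂ E]

lemma _root_.norm_inner_self_le_of_forall_norm_eq_one (T : E →L[ℂ] E) {c : ℝ}
    (h : ∀ ξ, ‖ξ‖ = 1 → ‖⟪ξ, T ξ⟫_ℂ‖ ≤ c) (w : E) : ‖⟪w, T w⟫_ℂ‖ ≤ c * ‖w‖ ^ 2 := by
  rcases eq_or_ne w 0 with rfl | hw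
  · simp
  have hu := h ((‖w‖⁻¹ : ℂ) • w) (norm_smul_inv_norm hw)
  simp only [map_smul, inner_smul_left, inner_smul_right, norm_mul, RCLike.norm_conj,
    norm_inv, Complex.norm_real, norm_norm] at hu
  have hw' : 0 < ‖w‖ := norm_pos_iff.2 hw
  calc ‖⟪w, T w⟫_ℂ‖ = ‖w‖⁻¹ * (‖w‖⁻¹ * ‖⟪w, T w⟫_ℂ‖) * ‖w‖ ^ 2 := by field_simp
    _ ≤ c * ‖w‖ ^ 2 := by gcongr

lemma _root_.norm_inner_map_le_of_norm_inner_self_le (T : E →L[ℂ] E) {c : ℝ}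
    (h : ∀ w, ‖⟪w, T w⟫_ℂ‖ ≤ c * ‖w‖ ^ 2) (x y : E) :
    ‖⟪T y, x⟫_ℂ‖ ≤ c * (‖x‖ ^ 2 + ‖y‖ ^ 2) := by
  have h' : ∀ w, ‖⟪T w, w⟫_ℂ‖ ≤ c * ‖w‖ ^ 2 := fun w => by rw [norm_inner_symm]; exact h w
  have hIy : ‖Complex.I • y‖ = ‖y‖ := by rw [norm_smul, Complex.norm_I, one_mul]
  have par₁ := parallelogram_law_with_norm ℂ x y
  have par₂ := parallelogram_law_with_norm ℂ x (Complex.I • y)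
  rw [hIy] at par₂
  have pol := inner_map_polarization T.toLinearMap x y
  simp only [ContinuousLinearMap.coe_coe] at pol
  rw [pol, norm_div, Complex.norm_ofNat, div_le_iff₀ (by norm_num)]
  refine (norm_sub_le _ _).trans ?_
  grw [norm_add_le, norm_sub_le]
  simp only [norm_mul, Complex.norm_I, one_mul]
  calc _ ≤ c * ‖x + y‖ ^ 2 + c * ‖x - y‖ ^ 2 + c * ‖x + Complex.I • y‖ ^ 2 +
        c * ‖x - Complex.I • y‖ ^ 2 := by gcongr <;> apply h'
    _ = c * (‖x‖ ^ 2 + ‖y‖ ^ 2) * 4 := by linear_combination c * par₁ + c * par₂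

lemma _root_.ContinuousLinearMap.norm_le_two_mul_of_norm_inner_self_le (T : E →L[ℂ] E) {c : ℝ}
    (hc : 0 ≤ c) (h : ∀ ξ, ‖ξ‖ = 1 → ‖⟪ξ, T ξ⟫_ℂ‖ ≤ c) : ‖T‖ ≤ 2 * c := by
  refine T.opNorm_le_of_unit_norm (by positivity) fun y hy => ?_
  rcases eq_or_ne (T y) 0 with hTy | hTy
  · rw [hTy, norm_zero]; positivity
  have key := norm_inner_map_le_of_norm_inner_self_le T
    (norm_inner_self_le_of_forall_norm_eq_one T h) ((‖T y‖⁻¹ : ℂ) • T y) y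
  rw [show ‖(‖T y‖⁻¹ : ℂ) • T y‖ = 1 from norm_smul_inv_norm hTy, hy, inner_smul_right,
    inner_self_eq_norm_sq_to_K] at key
  simp only [norm_mul, norm_inv, norm_pow, Complex.norm_real, RCLike.norm_ofReal, norm_norm,
    abs_norm] at key
  have hTy' : 0 < ‖T y‖ := norm_pos_iff.2 hTy
  calc ‖T y‖ = ‖T y‖⁻¹ * ‖T y‖ ^ 2 := by field_simp
    _ ≤ 2 * c := by linarith

end InnerProduct

lemma posIn_norm_smul_one_add {z : A} (hz : IsSelfAdjoint z) :
    PosIn ((‖z‖ : ℂ) • (1 : A) + z) := by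
  -- the unbundled instances on `A` assemble into a `CStarAlgebra`, giving the spectral order
  let : CStarAlgebra A := { }
  let := CStarAlgebra.spectralOrder A
  have := CStarAlgebra.spectralOrderedRing A
  have h : 0 ≤ (‖z‖ : ℂ) • (1 : A) + z := by
    have := hz.neg.le_algebraMap_norm_self
    rw [norm_neg, Algebra.algebraMap_eq_smul_one, ← Complex.coe_smul] at this
    simpa [add_comm] using add_le_add_left this z
  refine ⟨CFC.sqrt ((‖z‖ : ℂ) • (1 : A) + z), ?_⟩
  rw [(IsSelfAdjoint.of_nonneg (CFC.sqrt_nonneg _)).star_eq, CFC.sqrt_mul_sqrt_self _ h]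

lemma norm_le_of_mem_states {X : Submodule ℂ A} (hX : (1 : A) ∈ X) {σ : ↥X → ℂ}
    (hσ : σ ∈ States X) {z : ↥X} (hz : IsSelfAdjoint (z : A)) : ‖σ z‖ ≤ ‖(z : A)‖ := by
  have key : ∀ z' : ↥X, IsSelfAdjoint (z' : A) → 0 ≤ (‖(z' : A)‖ : ℂ) + σ z' := fun z' hz' => by
    have h := hσ.2.2 ((‖(z' : A)‖ : ℂ) • ⟨1, hX⟩ + z') (posIn_norm_smul_one_add hz')
    rwa [hσ.1.map_add, hσ.1.map_smul, hσ.2.1 _ rfl, smul_eq_mul, mul_one] at h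
  have h₂ := key (-z) (by simpa using hz.neg)
  rw [hσ.1.map_neg, Submodule.coe_neg, norm_neg, ← sub_eq_add_neg] at h₂
  exact Complex.norm_le_of_nonneg_add_of_nonneg_sub (key z hz) h₂

section PseudoDistance

variable {B : Type*} [Ring B] [Algebra ℂ B] {X : Submodule ℂ B} {dom : Set B} {L : B → ℝ}

lemma rhoAux_self (σ : ↥X → ℂ) : rhoAux X dom L σ σ = 0 := iSup_nnnorm_sub_self _

lemma rhoAux_comm (σ ω : ↥X → ℂ) : rhoAux X dom L σ ω = rhoAux X dom L ω σ :=
  iSup_nnnorm_sub_comm _ _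

lemma rhoAux_le_add (σ ω τ : ↥X → ℂ) :
    rhoAux X dom L σ τ ≤ rhoAux X dom L σ ω + rhoAux X dom L ω τ :=
  iSup_nnnorm_sub_le_add _ _ _

lemma nnnorm_sub_le_rhoAux {σ ω : ↥X → ℂ} {x : ↥X} (hx : (x : B) ∈ dom) (hL : L x ≤ 1) :
    (‖σ x - ω x‖₊ : ℝ≥0∞) ≤ rhoAux X dom L σ ω :=
  le_iSup (fun y : {y : ↥X // (y : B) ∈ dom ∧ L y ≤ 1} => (‖σ y.1 - ω y.1‖₊ : ℝ≥0∞)) ⟨x, hx, hL⟩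

end PseudoDistance

section UCP

variable {B R : Type*} [Ring B] [StarRing B] [Algebra ℂ B] [Ring R] [StarRing R] [Module ℂ R]
  {X : Submodule ℂ B}

lemma IsUCP.exists_eq_star_mul_self {φ : ↥X → R} (hφ : IsUCP X φ) {x : ↥X}
    (hx : PosIn (x : B)) : ∃ b : R, φ x = star b * b := by
  obtain ⟨c, hc⟩ := hx
  obtain ⟨y, hy⟩ := hφ.2.2 1 (Matrix.of fun _ _ => x) ⟨Matrix.of fun _ _ => c, by
    ext i j
    simp [coeMat, Matrix.mul_apply, hc]⟩
  exact ⟨y 0 0, by simpa [Matrix.mul_apply] using congrFun (congrFun hy 0) 0⟩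

lemma IsUCP.inner_apply_mem_states {n : ℕ} {φ : ↥X → MatAlg n} (hφ : IsUCP X φ)
    {ξ : EuclideanSpace ℂ (Fin n)} (hξ : ‖ξ‖ = 1) : (fun x => ⟪ξ, φ x ξ⟫_ℂ) ∈ States X := by
  refine ⟨⟨fun x y => ?_, fun c x => ?_⟩, fun x hx => ?_, fun x hx => ?_⟩
  · simp only [hφ.1.map_add, add_apply, inner_add_right]
  · simp only [hφ.1.map_smul, smul_apply, inner_smul_right, smul_eq_mul]
  · simp [hφ.2.1 x hx, hξ]
  · obtain ⟨b, hb⟩ := hφ.exists_eq_star_mul_self hx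
    show 0 ≤ ⟪ξ, φ x ξ⟫_ℂ
    rw [hb]
    exact (ContinuousLinearMap.isPositive_adjoint_comp_self b).inner_nonneg_right ξ

end UCP

lemma IsUCP.norm_apply_le {X : Submodule ℂ A} (hX : (1 : A) ∈ X) {n : ℕ} {φ : ↥X → MatAlg n}
    (hφ : IsUCP X φ) {z : ↥X} (hz : IsSelfAdjoint (z : A)) : ‖φ z‖ ≤ 2 * ‖(z : A)‖ :=
  (φ z).norm_le_two_mul_of_norm_inner_self_le (norm_nonneg _) fun _ hξ =>
    norm_le_of_mem_states hX (hφ.inner_apply_mem_states hξ) hz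

section LipOpSys

variable {S : LipOpSys A} {n : ℕ}

lemma LipOpSys.exists_isSelfAdjoint_add_I_smul (x : ↥S.X) :
    ∃ a b : ↥S.X, IsSelfAdjoint (a : A) ∧ IsSelfAdjoint (b : A) ∧ x = a + Complex.I • b := by
  have hstar := S.star_mem _ x.2
  refine ⟨⟨realPart (x : A), ?_⟩, ⟨imaginaryPart (x : A), ?_⟩, (realPart (x : A)).2,
    (imaginaryPart (x : A)).2, Subtype.ext (realPart_add_I_smul_imaginaryPart (x : A)).symm⟩
  · rw [realPart_apply_coe]
    exact S.X.smul_of_tower_mem _ (S.X.add_mem x.2 hstar)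
  · rw [imaginaryPart_apply_coe]
    exact S.X.smul_mem _ (S.X.smul_of_tower_mem _ (S.X.sub_mem x.2 hstar))

lemma rho_self (φ : ↥S.X → MatAlg n) : rho S n φ φ = 0 := iSup_nnnorm_sub_self _

lemma rho_le_add (φ ψ χ : ↥S.X → MatAlg n) : rho S n φ χ ≤ rho S n φ ψ + rho S n ψ χ :=
  iSup_nnnorm_sub_le_add _ _ _

lemma nnnorm_sub_le_rho {φ ψ : ↥S.X → MatAlg n} {x : ↥S.X} (hx : (x : A) ∈ S.dom)
    (hL : S.L x ≤ 1) : (‖φ x - ψ x‖₊ : ℝ≥0∞) ≤ rho S n φ ψ :=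
  le_iSup (fun y : {y : ↥S.X // (y : A) ∈ S.dom ∧ S.L y ≤ 1} => (‖φ y.1 - ψ y.1‖₊ : ℝ≥0∞))
    ⟨x, hx, hL⟩

lemma norm_sub_le_L_mul_of_rho_le {φ ψ : ↥S.X → MatAlg n} (hφ : IsUCP S.X φ)
    (hψ : IsUCP S.X ψ) {y : ↥S.X} (hy : (y : A) ∈ S.dom) {t : ℝ≥0} (hρ : rho S n φ ψ ≤ t) :
    ‖φ y - ψ y‖ ≤ S.L y * t := by
  rcases (S.L_nonneg y).eq_or_lt with hL | hL
  · obtain ⟨c, hc⟩ := (S.L_eq_zero_iff _ hy).1 hL.symm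
    have hy1 : y = (c : ℂ) • ⟨1, S.one_mem⟩ := Subtype.ext hc
    rw [hy1, hφ.1.map_smul, hψ.1.map_smul, hφ.2.1 _ rfl, hψ.2.1 _ rfl, sub_self, norm_zero]
    exact mul_nonneg (S.L_nonneg _) t.2
  set y' : ↥S.X := (((S.L y)⁻¹ : ℝ) : ℂ) • y
  have hy' : S.L y' ≤ 1 := by
    rw [Submodule.coe_smul, S.L_smul _ _ hy, abs_inv, abs_of_pos hL, inv_mul_cancel₀ hL.ne']
  have hclose : ‖φ y' - ψ y'‖ ≤ t := by
    exact_mod_cast (nnnorm_sub_le_rho (S.smul_mem_dom _ _ hy) hy').trans hρ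
  have hyy' : (S.L y : ℂ) • y' = y := by
    rw [smul_smul, ← Complex.ofReal_mul, mul_inv_cancel₀ hL.ne', Complex.ofReal_one, one_smul]
  calc ‖φ y - ψ y‖ = ‖(S.L y : ℂ) • (φ y' - ψ y')‖ := by
        rw [smul_sub, ← hφ.1.map_smul, ← hψ.1.map_smul, hyy']
    _ = S.L y * ‖φ y' - ψ y'‖ := by rw [norm_smul, Complex.norm_real, Real.norm_of_nonneg hL.le]
    _ ≤ S.L y * t := by gcongr

lemma rho_uniformContinuous_apply_of_isSelfAdjoint {a : ↥S.X} (ha : IsSelfAdjoint (a : A))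
    {ε : ℝ} (hε : 0 < ε) :
    ∃ δ > 0, ∀ φ ψ : ↥(UCPn S n), rho S n φ.1 ψ.1 < δ → ‖φ.1 a - ψ.1 a‖ < ε := by
  obtain ⟨y, hy, hay⟩ := Metric.mem_closure_iff.1 (S.dom_dense _ a.2 ha) (ε / 8) (by positivity)
  set y' : ↥S.X := ⟨y, (S.dom_subset y hy).1⟩
  have hsa : IsSelfAdjoint ((a - y' : ↥S.X) : A) := ha.sub (S.dom_subset y hy).2
  have hclose : ‖((a - y' : ↥S.X) : A)‖ < ε / 8 := by rwa [Submodule.coe_sub, ← dist_eq_norm]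
  have hLy := S.L_nonneg y
  set t : ℝ≥0 := ⟨ε / (2 * (S.L y + 1)), by positivity⟩
  have hLt : S.L y * t ≤ ε / 2 := by
    change S.L y * (ε / (2 * (S.L y + 1))) ≤ ε / 2
    rw [mul_div_assoc', div_le_div_iff₀ (by positivity) (by norm_num)]
    nlinarith
  refine ⟨t, ENNReal.coe_pos.2 (by change 0 < ε / (2 * (S.L y + 1)); positivity),
    fun φ ψ hρ => ?_⟩
  have hφ := φ.2.norm_apply_le S.one_mem hsa
  have hψ := ψ.2.norm_apply_le S.one_mem hsa
  have hlip := norm_sub_le_L_mul_of_rho_le φ.2 ψ.2 (y := y') hy hρ.le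
  calc ‖φ.1 a - ψ.1 a‖ = ‖φ.1 (a - y') - ψ.1 (a - y') + (φ.1 y' - ψ.1 y')‖ := by
        rw [φ.2.1.map_sub, ψ.2.1.map_sub]; abel_nf
    _ ≤ ‖φ.1 (a - y')‖ + ‖ψ.1 (a - y')‖ + ‖φ.1 y' - ψ.1 y'‖ := by
        grw [norm_add_le, norm_sub_le]
    _ < ε := by linarith

lemma rho_uniformContinuous_apply (x : ↥S.X) {ε : ℝ} (hε : 0 < ε) :
    ∃ δ > 0, ∀ φ ψ : ↥(UCPn S n), rho S n φ.1 ψ.1 < δ → ‖φ.1 x - ψ.1 x‖ < ε := by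
  obtain ⟨a, b, ha, hb, rfl⟩ := S.exists_isSelfAdjoint_add_I_smul x
  obtain ⟨δa, hδa, hca⟩ := rho_uniformContinuous_apply_of_isSelfAdjoint (n := n) ha (half_pos hε)
  obtain ⟨δb, hδb, hcb⟩ := rho_uniformContinuous_apply_of_isSelfAdjoint (n := n) hb (half_pos hε)
  refine ⟨min δa δb, lt_min hδa hδb, fun φ ψ hρ => ?_⟩
  calc ‖φ.1 (a + Complex.I • b) - ψ.1 (a + Complex.I • b)‖
        = ‖(φ.1 a - ψ.1 a) + Complex.I • (φ.1 b - ψ.1 b)‖ := by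
          rw [φ.2.1.map_add, ψ.2.1.map_add, φ.2.1.map_smul, ψ.2.1.map_smul, smul_sub]; abel_nf
    _ ≤ ‖φ.1 a - ψ.1 a‖ + ‖φ.1 b - ψ.1 b‖ := by
          grw [norm_add_le, norm_smul, Complex.norm_I, one_mul]
    _ < ε / 2 + ε / 2 := add_lt_add (hca φ ψ (hρ.trans_le (min_le_left _ _)))
          (hcb φ ψ (hρ.trans_le (min_le_right _ _)))
    _ = ε := add_halves ε

end LipOpSys

section VectorState

variable {S : LipOpSys A} {n : ℕ}

def vectorState (φ : ↥(UCPn S n)) (ξ : Metric.sphere (0 : EuclideanSpace ℂ (Fin n)) 1) :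
    ↥(States S.X) :=
  ⟨fun x => ⟪(ξ : EuclideanSpace ℂ (Fin n)), φ.1 x ξ⟫_ℂ,
    φ.2.inner_apply_mem_states (mem_sphere_zero_iff_norm.1 ξ.2)⟩

lemma continuous_vectorState : Continuous (Function.uncurry (vectorState (S := S) (n := n))) := by
  refine Continuous.subtype_mk (continuous_pi fun x => ?_) _
  have hξ : Continuous fun p : ↥(UCPn S n) × Metric.sphere (0 : EuclideanSpace ℂ (Fin n)) 1 =>
      (p.2 : EuclideanSpace ℂ (Fin n)) := continuous_subtype_val.comp continuous_snd
  have hφ : Continuous fun p : ↥(UCPn S n) × Metric.sphere (0 : EuclideanSpace ℂ (Fin n)) 1 =>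
      p.1.1 x := (continuous_apply x).comp (continuous_subtype_val.comp continuous_fst)
  exact hξ.inner (isBoundedBilinearMap_apply.continuous.comp (hφ.prodMk hξ))

lemma tendsto_rho_nhds_zero (φ₀ : ↥(UCPn S n)) :
    Tendsto (fun ψ : ↥(UCPn S n) => rho S n φ₀.1 ψ.1) (𝓝 φ₀) (𝓝 0) := by
  refine ENNReal.tendsto_nhds_zero.2 fun ε hε => ?_
  obtain ⟨r, hr, hrε⟩ := ENNReal.lt_iff_exists_nnreal_btwn.1 hε
  have isOpen_ball : ∀ (σ : ↥(States S.X)) (δ : ℝ≥0∞), 0 < δ →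
      IsOpen {ω : ↥(States S.X) | rhoAux S.X S.dom S.L σ.1 ω.1 < δ} := fun σ δ hδ => by
    rw [← S.weakStar]
    exact isOpen_ballTopology_ball σ hδ
  filter_upwards [eventually_forall_lt_of_compactSpace (fun σ => rhoAux_self σ.1)
    (fun σ ω => rhoAux_comm σ.1 ω.1) (fun σ ω τ => rhoAux_le_add σ.1 ω.1 τ.1) isOpen_ball
    continuous_vectorState φ₀ (ENNReal.coe_pos.2 (half_pos (ENNReal.coe_pos.1 hr)))] with ψ hψ
  refine le_trans (iSup_le fun x => ?_) hrε.le
  have hx : ‖φ₀.1 x.1 - ψ.1 x.1‖ ≤ 2 * ((r / 2 : ℝ≥0) : ℝ) := by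
    refine (φ₀.1 x.1 - ψ.1 x.1).norm_le_two_mul_of_norm_inner_self_le (by positivity)
      fun ξ hξ => ?_
    have hvs := (nnnorm_sub_le_rhoAux x.2.1 x.2.2).trans_lt (hψ ⟨ξ, by simpa using hξ⟩)
    rw [sub_apply, inner_sub_right]
    exact_mod_cast hvs.le
  rw [NNReal.coe_div, NNReal.coe_two, mul_div_cancel₀ _ two_ne_zero] at hx
  exact_mod_cast hx

end VectorState

theorem statement3_general (S : LipOpSys A) (n : ℕ) :
    ballTopology (fun φ ψ : ↥(UCPn S n) => rho S n φ.1 ψ.1) =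
      instTopologicalSpaceSubtype := by
  refine le_antisymm ?_
    (le_ballTopology (fun φ ψ χ => rho_le_add φ.1 ψ.1 χ.1) tendsto_rho_nhds_zero)
  rw [← continuous_id_iff_le]
  refine continuous_induced_rng.2 (@continuous_pi _ _ _ (ballTopology _) _ _ fun x =>
    continuous_ballTopology (fun φ => rho_self φ.1) fun ε hε => ?_)
  simpa only [dist_eq_norm, Function.comp_apply, id] using rho_uniformContinuous_apply x hε

/-- For a Lip-normed operator system `(X, L)` and every `n ≥ 1`, the
topology induced on `UCPₙ(X)` by the metric `ρ_{L,n}` coincides with the point-norm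
topology (the topology of pointwise norm convergence of maps from `X` to `Mₙ`). -/
theorem statement3 (S : LipOpSys A) (n : ℕ) (hn : 1 ≤ n) :
    ballTopology (fun φ ψ : ↥(UCPn S n) => rho S n φ.1 ψ.1) =
      instTopologicalSpaceSubtype :=
  statement3_general S n
end QGHD
end
end

section
/- If (X, L_X) and (Y, L_Y) are Lip-normed operator systems and m > n >= 1 are natural numbers, then dist^n_s(X, Y) <= dist^m_s(X, Y). -/
/- Framework for Kerr's "Matricial quantum Gromov-Hausdorff distance":
operator systems inside unital C*-algebras, Lip-normed operator systems,
matrix state spaces, and the matricial quantum Gromov-Hausdorff distances. -/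

open scoped ComplexOrder ENNReal

noncomputable section

universe u v w

namespace QGHD

variable {A : Type u} [NormedRing A] [StarRing A] [CStarRing A]
  [NormedAlgebra ℂ A] [CompleteSpace A] [StarModule ℂ A]
variable {B : Type v} [NormedRing B] [StarRing B] [CStarRing B]
  [NormedAlgebra ℂ B] [CompleteSpace B] [StarModule ℂ B]

/-! Compressing by an isometry `V : ℂⁿ → ℂᵐ`, `φ ↦ V† φ(·) V`, maps `UCPₘ` onto `UCPₙ`: every
`φ ∈ UCPₙ` is the compression of `V φ(·) V† + ⟪u, φ(·) u⟫ (1 - V V†)` for a unit vector `u`,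
which is u.c.p. because it has a Kraus form `∑ₖ Wₖ† φ(·) Wₖ` with `∑ₖ Wₖ† Wₖ = 1`.
Compression does not increase norms, so for every `M ∈ M(L_X, L_Y)` each half of the Hausdorff
distance at level `n` is bounded by the same half at level `m`. -/

open scoped InnerProduct
open ContinuousLinearMap InnerProductSpace
open scoped Matrix

section Transport

variable {k r r' : ℕ}

lemma entry_star (z : MatAlg r) (p q : Fin r) : entry (star z) p q = star (entry z q p) := by
  rw [entry, entry, star_eq_adjoint, adjoint_inner_right, ← inner_conj_symm]
  rfl

lemma entry_sum {κ : Type*} [Fintype κ] (z : κ → MatAlg r) (p q : Fin r) :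
    entry (∑ s, z s) p q = ∑ s, entry (z s) p q := by
  rw [entry, sum_apply, inner_sum]
  rfl

lemma entry_adjoint_comp (a b : EuclideanSpace ℂ (Fin r) →L[ℂ] EuclideanSpace ℂ (Fin r'))
    (p q : Fin r) :
    entry (a† ∘L b) p q = ⟪a (EuclideanSpace.single p 1), b (EuclideanSpace.single q 1)⟫_ℂ := by
  rw [entry, comp_apply, adjoint_inner_right]

lemma toEuclideanCLM_symm_apply_eq_entry (z : MatAlg r) (p q : Fin r) :
    (Matrix.toEuclideanCLM (𝕜 := ℂ) (n := Fin r)).symm z p q = entry z p q := by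
  obtain ⟨M, rfl⟩ : ∃ M, Matrix.toEuclideanCLM (𝕜 := ℂ) M = z :=
    ⟨_, StarAlgEquiv.apply_symm_apply _ z⟩
  rw [StarAlgEquiv.symm_apply_apply, entry, EuclideanSpace.inner_single_left]
  simp [EuclideanSpace.single]

def blockMatrixEquiv (k r : ℕ) :
    Matrix (Fin k) (Fin k) (MatAlg r) ≃+* Matrix (Fin k × Fin r) (Fin k × Fin r) ℂ :=
  (RingEquiv.mapMatrix (Matrix.toEuclideanCLM (𝕜 := ℂ) (n := Fin r)).symm.toRingEquiv).trans
    (Matrix.compRingEquiv (Fin k) (Fin r) ℂ)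

lemma blockMatrixEquiv_apply (x : Matrix (Fin k) (Fin k) (MatAlg r)) (i j : Fin k)
    (p q : Fin r) : blockMatrixEquiv k r x (i, p) (j, q) = entry (x i j) p q := by
  simp only [blockMatrixEquiv, RingEquiv.coe_trans, Function.comp_apply,
    RingEquiv.mapMatrix_apply, Matrix.compRingEquiv_apply, Matrix.comp_apply, Matrix.map_apply]
  exact toEuclideanCLM_symm_apply_eq_entry _ p q

lemma blockMatrixEquiv_conjTranspose (x : Matrix (Fin k) (Fin k) (MatAlg r)) :
    blockMatrixEquiv k r xᴴ = (blockMatrixEquiv k r x)ᴴ := by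
  ext ⟨i, p⟩ ⟨j, q⟩
  rw [blockMatrixEquiv_apply, Matrix.conjTranspose_apply, Matrix.conjTranspose_apply,
    blockMatrixEquiv_apply, entry_star]

open scoped MatrixOrder in
lemma matPos_of_posSemidef {x : Matrix (Fin k) (Fin k) (MatAlg r)}
    (hx : (blockMatrixEquiv k r x).PosSemidef) : MatPos x := by
  obtain ⟨b, hb⟩ := CStarAlgebra.nonneg_iff_eq_star_mul_self.mp hx.nonneg
  refine ⟨(blockMatrixEquiv k r).symm b, (blockMatrixEquiv k r).injective ?_⟩
  rw [map_mul, blockMatrixEquiv_conjTranspose, RingEquiv.apply_symm_apply, hb]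
  rfl

lemma matPos_sum_adjoint_comp {κ : Type*} [Fintype κ]
    (a : κ → Fin k → (EuclideanSpace ℂ (Fin r) →L[ℂ] EuclideanSpace ℂ (Fin r'))) :
    MatPos (Matrix.of fun i j => ∑ s, (a s i)† ∘L a s j) := by
  refine matPos_of_posSemidef ?_
  have hgram : blockMatrixEquiv k r (Matrix.of fun i j => ∑ s, (a s i)† ∘L a s j) =
      ∑ s, Matrix.gram ℂ fun ip : Fin k × Fin r => a s ip.1 (EuclideanSpace.single ip.2 1) := by
    ext ⟨i, p⟩ ⟨j, q⟩
    simp only [blockMatrixEquiv_apply, Matrix.of_apply, entry_sum, entry_adjoint_comp,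
      Matrix.sum_apply, Matrix.gram_apply]
  rw [hgram]
  exact Matrix.posSemidef_sum _ fun s _ => Matrix.posSemidef_gram ℂ _

end Transport

lemma MatPos.exists_eq_sum {R : Type*} [Ring R] [StarRing R] {k : ℕ}
    {f : Fin k → Fin k → R} (hf : MatPos (Matrix.of f)) :
    ∃ y : Matrix (Fin k) (Fin k) R, ∀ i j, f i j = ∑ s, star (y s i) * y s j := by
  obtain ⟨y, hy⟩ := hf
  exact ⟨y, fun i j => by simpa [Matrix.mul_apply] using congrFun₂ hy i j⟩

section Kraus

variable {R : Type*} [Ring R] [StarRing R] [Algebra ℂ R] {X : Submodule ℂ R}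
  {α ι : Type*} [Fintype ι] {r r' : ℕ}

def krausMap (W : ι → (EuclideanSpace ℂ (Fin r') →L[ℂ] EuclideanSpace ℂ (Fin r)))
    (φ : α → MatAlg r) : α → MatAlg r' :=
  fun x => ∑ k, (W k)† ∘L φ x ∘L W k

theorem isUCP_krausMap {W : ι → (EuclideanSpace ℂ (Fin r') →L[ℂ] EuclideanSpace ℂ (Fin r))}
    (hW : ∑ k, (W k)† ∘L W k = 1) {φ : ↥X → MatAlg r} (hφ : IsUCP X φ) :
    IsUCP X (krausMap W φ) := by
  obtain ⟨hlin, hunit, hcp⟩ := hφ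
  refine ⟨⟨fun x y => ?_, fun c x => ?_⟩, fun x hx => ?_, fun k x hx => ?_⟩
  · simp [krausMap, hlin.map_add, comp_add, add_comp, Finset.sum_add_distrib]
  · simp [krausMap, hlin.map_smul, smul_comp, Finset.smul_sum]
  · simpa [krausMap, hunit x hx, one_def] using hW
  · obtain ⟨y, hy⟩ := (hcp k x hx).exists_eq_sum
    have hsum : (Matrix.of fun i j => krausMap W φ (x i j)) =
        Matrix.of fun i j => ∑ ks : ι × Fin k, (y ks.2 i ∘L W ks.1)† ∘L (y ks.2 j ∘L W ks.1) := by
      ext1 i j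
      simp only [Matrix.of_apply, krausMap, hy, Fintype.sum_prod_type, comp_finsetSum,
        finsetSum_comp, adjoint_comp, star_eq_adjoint, mul_def, comp_assoc]
    rw [hsum]
    exact matPos_sum_adjoint_comp _

end Kraus

lemma sum_rankOne_single_eq_one {r : ℕ} :
    ∑ j, rankOne ℂ (EuclideanSpace.single j (1 : ℂ)) (EuclideanSpace.single j (1 : ℂ)) =
      (1 : MatAlg r) := by
  simpa [one_def] using (EuclideanSpace.basisFun (Fin r) ℂ).sum_rankOne_eq_id

theorem exists_adjoint_comp_self_eq_one {n m : ℕ} (h : n ≤ m) :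
    ∃ V : EuclideanSpace ℂ (Fin n) →L[ℂ] EuclideanSpace ℂ (Fin m), V† ∘L V = 1 := by
  refine ⟨∑ p, rankOne ℂ (EuclideanSpace.single (Fin.castLE h p) 1) (EuclideanSpace.single p 1),
    ?_⟩
  have hinj := Fin.castLE_injective h
  simp [map_sum, comp_finsetSum, finsetSum_comp, rankOne_comp_rankOne,
    EuclideanSpace.inner_single_left, hinj.eq_iff, sum_rankOne_single_eq_one]

theorem norm_adjoint_comp_comp_le {n m : ℕ}
    {V : EuclideanSpace ℂ (Fin n) →L[ℂ] EuclideanSpace ℂ (Fin m)} (hV : V† ∘L V = 1)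
    (a : MatAlg m) : ‖V† ∘L a ∘L V‖ ≤ ‖a‖ := by
  have hV1 : ‖V‖ ≤ 1 := by
    have h := norm_adjoint_comp_self V
    rw [hV] at h
    have h1 : ‖(1 : MatAlg n)‖ ≤ 1 := norm_id_le
    nlinarith [norm_nonneg V]
  calc ‖V† ∘L a ∘L V‖ ≤ ‖V†‖ * (‖a‖ * ‖V‖) :=
        (opNorm_comp_le _ _).trans (mul_le_mul_of_nonneg_left (opNorm_comp_le _ _) (norm_nonneg _))
    _ ≤ 1 * (‖a‖ * 1) := by
        rw [LinearIsometryEquiv.norm_map]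
        gcongr
    _ = ‖a‖ := by ring

section Compression

variable {R : Type*} [Ring R] [StarRing R] [Algebra ℂ R] {X : Submodule ℂ R}
  {α : Type*} {n m : ℕ} {V : EuclideanSpace ℂ (Fin n) →L[ℂ] EuclideanSpace ℂ (Fin m)}

def compress (V : EuclideanSpace ℂ (Fin n) →L[ℂ] EuclideanSpace ℂ (Fin m)) (φ : α → MatAlg m) :
    α → MatAlg n :=
  fun x => V† ∘L φ x ∘L V

theorem mapsTo_compress (hV : V† ∘L V = 1) :
    Set.MapsTo (compress V) {ψ : ↥X → MatAlg m | IsUCP X ψ} {φ | IsUCP X φ} := by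
  intro φ hφ
  have hkraus : compress V φ = krausMap (fun _ : Unit => V) φ := by
    funext x
    simp [compress, krausMap]
  rw [Set.mem_ofPred_eq, hkraus]
  exact isUCP_krausMap (by simpa using hV) hφ

lemma compress_krausMap {ι : Type*} [Fintype ι]
    (W : ι → (EuclideanSpace ℂ (Fin m) →L[ℂ] EuclideanSpace ℂ (Fin n))) (φ : α → MatAlg n) :
    compress V (krausMap W φ) = krausMap (fun k => W k ∘L V) φ := by
  funext x
  simp [compress, krausMap, comp_finsetSum, finsetSum_comp, adjoint_comp, comp_assoc]

theorem surjOn_compress (hV : V† ∘L V = 1) {u : EuclideanSpace ℂ (Fin n)} (hu : ‖u‖ = 1) :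
    Set.SurjOn (compress V) {ψ : ↥X → MatAlg m | IsUCP X ψ} {φ | IsUCP X φ} := by
  intro φ hφ
  set Q : MatAlg m := 1 - V ∘L V†
  have hQV : Q ∘L V = 0 := by simp [Q, sub_comp, comp_assoc, hV, one_def]
  have hQQ : Q† ∘L Q = Q := by
    have hP : (V ∘L V†) ∘L (V ∘L V†) = V ∘L V† := by
      rw [comp_assoc, ← comp_assoc (V†), hV, one_def, id_comp]
    simp only [Q, map_sub, adjoint_comp, adjoint_adjoint, sub_comp, comp_sub, hP]
    simp [one_def, adjoint_id]
  -- Kraus operators of `V φ(·) V† + ⟪u, φ(·) u⟫ Q`.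
  let W : Option (Fin m) → (EuclideanSpace ℂ (Fin m) →L[ℂ] EuclideanSpace ℂ (Fin n)) :=
    fun k => Option.elim k (V†) fun j => rankOne ℂ u (EuclideanSpace.single j 1) ∘L Q
  refine ⟨krausMap W φ, isUCP_krausMap ?_ hφ, ?_⟩
  · have hterm : ∀ j, (W (some j))† ∘L W (some j) =
        Q† ∘L rankOne ℂ (EuclideanSpace.single j 1) (EuclideanSpace.single j 1) ∘L Q := by
      intro j
      simp only [W, Option.elim, adjoint_comp, adjoint_rankOne]
      rw [comp_assoc, ← comp_assoc _ _ Q, rankOne_comp_rankOne, inner_self_eq_norm_sq_to_K, hu]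
      simp
    have hsum : ∑ j, (W (some j))† ∘L W (some j) = Q := by
      rw [Finset.sum_congr rfl fun j _ => hterm j, ← comp_finsetSum, ← finsetSum_comp,
        sum_rankOne_single_eq_one, one_def, id_comp, hQQ]
    rw [Fintype.sum_option, hsum]
    simp [W, Q]
  · rw [compress_krausMap]
    funext x
    simp [krausMap, W, Fintype.sum_option, comp_assoc, hQV]
    rw [← comp_assoc, hV, one_def, id_comp, comp_id]

end Compression

lemma iSup_iInf_le_of_surjOn_of_mapsTo {γ α β α' β' : Type*} [CompleteLattice γ]
    {A : Set α} {B : Set β} {A' : Set α'} {B' : Set β'} {d : α → β → γ} {d' : α' → β' → γ}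
    {f : α' → α} {g : β' → β} (hf : Set.SurjOn f A' A) (hg : Set.MapsTo g B' B)
    (hd : ∀ a b, d (f a) (g b) ≤ d' a b) :
    ⨆ a ∈ A, ⨅ b ∈ B, d a b ≤ ⨆ a' ∈ A', ⨅ b' ∈ B', d' a' b' := by
  refine iSup₂_le fun a ha => ?_
  obtain ⟨a', ha', rfl⟩ := hf ha
  refine le_iSup₂_of_le a' ha' (le_iInf₂ fun b' hb' => ?_)
  exact (iInf₂_le (g b') (hg hb')).trans (hd a' b')

lemma crossRho_compress_le (S : LipOpSys A) (T : LipOpSys B) (M : LipOpSys (A × B)) {n m : ℕ}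
    {V : EuclideanSpace ℂ (Fin n) →L[ℂ] EuclideanSpace ℂ (Fin m)} (hV : V† ∘L V = 1)
    (φ : ↥S.X → MatAlg m) (ψ : ↥T.X → MatAlg m) :
    crossRho S T M n (compress V φ) (compress V ψ) ≤ crossRho S T M m φ ψ := by
  refine iSup_mono fun p => ENNReal.coe_le_coe.2 ?_
  have h := norm_adjoint_comp_comp_le hV (φ p.1.1 - ψ p.1.2)
  rw [sub_comp, comp_sub] at h
  exact h

theorem hausdorffD_le_of_le (S : LipOpSys A) (T : LipOpSys B) (M : LipOpSys (A × B)) {n m : ℕ}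
    (hn : 1 ≤ n) (hnm : n ≤ m) : hausdorffD S T M n ≤ hausdorffD S T M m := by
  obtain ⟨V, hV⟩ := exists_adjoint_comp_self_eq_one hnm
  have hu : ‖EuclideanSpace.single (⟨0, hn⟩ : Fin n) (1 : ℂ)‖ = 1 := by simp
  exact max_le_max
    (iSup_iInf_le_of_surjOn_of_mapsTo (surjOn_compress hV hu) (mapsTo_compress hV)
      (crossRho_compress_le S T M hV))
    (iSup_iInf_le_of_surjOn_of_mapsTo (d := fun ψ φ => crossRho S T M n φ ψ)
      (surjOn_compress hV hu) (mapsTo_compress hV) fun ψ φ => crossRho_compress_le S T M hV φ ψ)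

/-- For Lip-normed operator systems `(X, L_X)`, `(Y, L_Y)` and natural
numbers `m > n ≥ 1`, one has `distⁿₛ(X, Y) ≤ distᵐₛ(X, Y)`. -/
theorem statement14 (S : LipOpSys A) (T : LipOpSys B) (n m : ℕ)
    (hn : 1 ≤ n) (hnm : n < m) :
    distN S T n ≤ distN S T m :=
  iInf_mono fun M => hausdorffD_le_of_le S T M.1 hn hnm.le

end QGHD
end
end
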